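/- Let A be strictly positive and let T1, T2, T3, T4 be bounded linear operators on H each admitting an A-adjoint (i.e. for each i there exists S_i with A∘S_i = T_i*∘A). Then w_B([[T1,T2],[T3,T4]]) ≥ max{w_A(T1), w_A(T4), w_A(T2 + T3)/2, w_A(T2 - T3)/2}. -/

import Mathlib

/-!
Writing `A = R²` with `R = √A` turns `‖·‖_A` into `x ↦ ‖R x‖`, so `⟨A·,·⟩` satisfies
Cauchy–Schwarz. If `T` has an `A`-adjoint `S`, then `K = S T` is `A`-selfadjoint, so
`‖K u‖_A² ≤ ‖u‖_A ‖K² u‖_A`; iterating along the powers `K^(2ⁿ)` and comparing with the crude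
bound `‖v‖_A ≤ ‖R‖ ‖v‖` gives `‖K u‖_A ≤ ‖K‖ ‖u‖_A`, hence `‖T u‖_A ≤ √‖K‖ ‖u‖_A`. Thus the set
defining `w_B` is bounded, so `w_B` dominates each of its elements.

The test vectors `(x, 0)` and `(0, x)` give `w_A(T1)` and `w_A(T4)`. For `|ε| = 1` the vectors
`(x, ±ε x)/√2` have `B`-norm `1`, and the difference of their values is
`ε̄ ⟨A T2 x, x⟩ + ε ⟨A T3 x, x⟩`; `ε = 1` and `ε = i` give the bounds through `T2 ± T3`.
-/

open scoped InnerProductSpace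
open ContinuousLinearMap

variable {H : Type*} [NormedAddCommGroup H] [InnerProductSpace ℂ H] [CompleteSpace H]

/-- The `A`-seminorm `‖x‖_A = √⟨Ax,x⟩`. -/
noncomputable def aNorm (A : H →L[ℂ] H) (x : H) : ℝ :=
  Real.sqrt (⟪A x, x⟫_ℂ).re

/-- The `A`-numerical radius `w_A(T) = sup {|⟨ATx,x⟩| : x ∈ H, ‖x‖_A = 1}`. -/
noncomputable def wA (A T : H →L[ℂ] H) : ℝ :=
  sSup {r : ℝ | ∃ x : H, aNorm A x = 1 ∧ r = ‖⟪A (T x), x⟫_ℂ‖}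

/-- The `A`-operator seminorm `‖T‖_A = sup {‖Tx‖_A : x ∈ closure (range A), ‖x‖_A = 1}`. -/
noncomputable def aOpNorm (A T : H →L[ℂ] H) : ℝ :=
  sSup {r : ℝ | ∃ x : H, x ∈ closure (Set.range (⇑A)) ∧ aNorm A x = 1 ∧ r = aNorm A (T x)}

/-- The `B`-numerical radius of the operator matrix `[[T1,T2],[T3,T4]]` acting on `H ⊕ H` by
`(x, y) ↦ (T1 x + T2 y, T3 x + T4 y)`, where `B = [[A,0],[0,A]]`:
`w_B(T) = sup {|⟨BTz,z⟩| : z ∈ H ⊕ H, ‖z‖_B = 1}`. -/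
noncomputable def wB (A T1 T2 T3 T4 : H →L[ℂ] H) : ℝ :=
  sSup {r : ℝ | ∃ x y : H, Real.sqrt ((⟪A x, x⟫_ℂ).re + (⟪A y, y⟫_ℂ).re) = 1 ∧
    r = ‖⟪A (T1 x + T2 y), x⟫_ℂ + ⟪A (T3 x + T4 y), y⟫_ℂ‖}

lemma Real.le_mul_of_forall_pow_two_pow_le {a b M C : ℝ} (hb : 0 ≤ b) (hM : 0 ≤ M)
    (h : ∀ n : ℕ, a ^ 2 ^ n ≤ b ^ (2 ^ n - 1) * (M ^ 2 ^ n * C)) :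
    a ≤ M * b := by
  by_contra! hlt
  rcases hb.eq_or_lt with rfl | hb
  · have := h 1
    norm_num at this
    nlinarith
  obtain ⟨c, hMc, hca⟩ := exists_between hlt
  have hC : 0 ≤ C := by
    have := h 0
    norm_num at this
    nlinarith
  have hc : 0 < c := lt_of_le_of_lt (by positivity) hMc
  have hac : 1 < a / c := (one_lt_div hc).mpr hca
  obtain ⟨n, hn⟩ := pow_unbounded_of_one_lt (C / b) hac
  have key : (a / c) ^ 2 ^ n ≤ C / b := by
    rw [div_pow, le_div_iff₀ hb, div_mul_eq_mul_div, div_le_iff₀ (by positivity)]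
    calc a ^ 2 ^ n * b ≤ b ^ (2 ^ n - 1) * (M ^ 2 ^ n * C) * b := by gcongr; exact h n
      _ = (M * b) ^ 2 ^ n * C := by
        rw [mul_pow, mul_right_comm, ← pow_succ, Nat.sub_add_cancel Nat.one_le_two_pow]; ring
      _ ≤ C * c ^ 2 ^ n := by
        rw [mul_comm]; gcongr
  have := pow_le_pow_right₀ hac.le (Nat.lt_two_pow_self (n := n)).le
  linarith

def HasAAdjoint (A T : H →L[ℂ] H) : Prop :=
  ∃ S : H →L[ℂ] H, A ∘L S = adjoint T ∘L A

section APositive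

variable {A : H →L[ℂ] H}

lemma inner_eq_inner_sqrt (hA : A.IsPositive) (x y : H) :
    ⟪A x, y⟫_ℂ = ⟪CFC.sqrt A x, CFC.sqrt A y⟫_ℂ := by
  have hs : IsSelfAdjoint (CFC.sqrt A) := IsSelfAdjoint.of_nonneg (CFC.sqrt_nonneg A)
  conv_lhs => rw [← CFC.sqrt_mul_sqrt_self A ((nonneg_iff_isPositive A).mpr hA)]
  rw [mul_apply_eq_comp, ← adjoint_inner_right, ← star_eq_adjoint, hs.star_eq]

lemma aNorm_eq_norm_sqrt (hA : A.IsPositive) (x : H) : aNorm A x = ‖CFC.sqrt A x‖ := by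
  rw [aNorm, inner_eq_inner_sqrt hA, inner_self_eq_norm_sq_to_K]
  norm_cast
  exact Real.sqrt_sq (norm_nonneg _)

lemma norm_inner_le_aNorm_mul_aNorm (hA : A.IsPositive) (x y : H) :
    ‖⟪A x, y⟫_ℂ‖ ≤ aNorm A x * aNorm A y := by
  rw [inner_eq_inner_sqrt hA, aNorm_eq_norm_sqrt hA, aNorm_eq_norm_sqrt hA]
  exact norm_inner_le_norm _ _

lemma aNorm_le_opNorm_sqrt_mul_norm (hA : A.IsPositive) (x : H) :
    aNorm A x ≤ ‖CFC.sqrt A‖ * ‖x‖ := by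
  rw [aNorm_eq_norm_sqrt hA]
  exact le_opNorm _ _

omit [CompleteSpace H] in
lemma aNorm_nonneg (x : H) : 0 ≤ aNorm A x := Real.sqrt_nonneg _

omit [CompleteSpace H] in
lemma aNorm_sq (hA : A.IsPositive) (x : H) : aNorm A x ^ 2 = (⟪A x, x⟫_ℂ).re :=
  Real.sq_sqrt (hA.re_inner_nonneg_left x)

lemma aNorm_sq_eq_re_inner_mul (hA : A.IsPositive) {S T : H →L[ℂ] H} (hST : A * T = star S * A)
    (u : H) : aNorm A (T u) ^ 2 = (⟪A u, (S * T) u⟫_ℂ).re := by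
  have happ : A (T u) = star S (A u) := by
    simpa only [mul_apply_eq_comp] using congr($hST u)
  rw [aNorm_sq hA, happ, star_eq_adjoint, adjoint_inner_left, mul_apply_eq_comp]

lemma mul_pow_eq_star_pow_mul {K : H →L[ℂ] H} (hK : A * K = star K * A) (m : ℕ) :
    A * K ^ m = star (K ^ m) * A := by
  rw [star_pow]
  induction m with
  | zero => simp
  | succ n ih => rw [pow_succ, pow_succ, ← mul_assoc, ih, mul_assoc, hK, ← mul_assoc]

lemma aNorm_pow_apply_sq_le (hA : A.IsPositive) {K : H →L[ℂ] H} (hK : A * K = star K * A)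
    (m : ℕ) (u : H) :
    aNorm A ((K ^ m) u) ^ 2 ≤ aNorm A u * aNorm A ((K ^ (2 * m)) u) := by
  rw [aNorm_sq_eq_re_inner_mul hA (mul_pow_eq_star_pow_mul hK m), ← pow_add, ← two_mul]
  exact (Complex.re_le_norm _).trans (norm_inner_le_aNorm_mul_aNorm hA _ _)

lemma aNorm_apply_pow_le_pow_mul (hA : A.IsPositive) {K : H →L[ℂ] H} (hK : A * K = star K * A)
    (n : ℕ) (u : H) :
    aNorm A (K u) ^ 2 ^ n ≤ aNorm A u ^ (2 ^ n - 1) * aNorm A ((K ^ 2 ^ n) u) := by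
  induction n with
  | zero => simp
  | succ n ih =>
    calc aNorm A (K u) ^ 2 ^ (n + 1) = (aNorm A (K u) ^ 2 ^ n) ^ 2 := by rw [pow_succ, pow_mul]
    _ ≤ (aNorm A u ^ (2 ^ n - 1) * aNorm A ((K ^ 2 ^ n) u)) ^ 2 :=
      pow_le_pow_left₀ (pow_nonneg (aNorm_nonneg _) _) ih 2
    _ = aNorm A u ^ (2 * (2 ^ n - 1)) * aNorm A ((K ^ 2 ^ n) u) ^ 2 := by
      rw [mul_pow, ← pow_mul, mul_comm _ 2]
    _ ≤ aNorm A u ^ (2 * (2 ^ n - 1)) * (aNorm A u * aNorm A ((K ^ (2 * 2 ^ n)) u)) := by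
      exact mul_le_mul_of_nonneg_left (aNorm_pow_apply_sq_le hA hK _ u)
        (pow_nonneg (aNorm_nonneg u) _)
    _ = aNorm A u ^ (2 ^ (n + 1) - 1) * aNorm A ((K ^ 2 ^ (n + 1)) u) := by
      rw [← mul_assoc, ← pow_succ, pow_succ 2 n, mul_comm 2 (2 ^ n)]
      congr 3
      have := Nat.one_le_two_pow (n := n)
      omega

lemma aNorm_apply_le_opNorm_mul (hA : A.IsPositive) {K : H →L[ℂ] H} (hK : A * K = star K * A)
    (u : H) : aNorm A (K u) ≤ ‖K‖ * aNorm A u := by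
  refine Real.le_mul_of_forall_pow_two_pow_le (aNorm_nonneg u) (norm_nonneg K)
    (C := ‖CFC.sqrt A‖ * ‖u‖) fun n => (aNorm_apply_pow_le_pow_mul hA hK n u).trans
      (mul_le_mul_of_nonneg_left ?_ (pow_nonneg (aNorm_nonneg u) _))
  calc aNorm A ((K ^ 2 ^ n) u) ≤ ‖CFC.sqrt A‖ * ‖(K ^ 2 ^ n) u‖ :=
        aNorm_le_opNorm_sqrt_mul_norm hA _
    _ ≤ ‖CFC.sqrt A‖ * (‖K‖ ^ 2 ^ n * ‖u‖) := by
        gcongr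
        exact (le_opNorm _ _).trans (by gcongr; exact norm_pow_le' K (Nat.two_pow_pos n))
    _ = ‖K‖ ^ 2 ^ n * (‖CFC.sqrt A‖ * ‖u‖) := by ring

lemma HasAAdjoint.exists_aNorm_apply_le (hA : A.IsPositive) {T : H →L[ℂ] H}
    (hT : HasAAdjoint A T) : ∃ c, 0 ≤ c ∧ ∀ u, aNorm A (T u) ≤ c * aNorm A u := by
  obtain ⟨S, hS⟩ := hT
  have hAS : A * S = star T * A := hS
  have hAT : A * T = star S * A := by
    simpa only [star_mul, star_star, hA.isSelfAdjoint.star_eq] using (congr(star $hAS)).symm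
  have hK : A * (S * T) = star (S * T) * A := by
    rw [star_mul, ← mul_assoc, hAS, mul_assoc, hAT, ← mul_assoc]
  refine ⟨√‖S * T‖, Real.sqrt_nonneg _, fun u => ?_⟩
  have hsq : aNorm A (T u) ^ 2 ≤ ‖S * T‖ * aNorm A u ^ 2 :=
    calc aNorm A (T u) ^ 2 = (⟪A u, (S * T) u⟫_ℂ).re := aNorm_sq_eq_re_inner_mul hA hAT u
    _ ≤ aNorm A u * aNorm A ((S * T) u) :=
        (Complex.re_le_norm _).trans (norm_inner_le_aNorm_mul_aNorm hA _ _)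
    _ ≤ aNorm A u * (‖S * T‖ * aNorm A u) :=
        mul_le_mul_of_nonneg_left (aNorm_apply_le_opNorm_mul hA hK u) (aNorm_nonneg u)
    _ = ‖S * T‖ * aNorm A u ^ 2 := by ring
  rw [← Real.sqrt_sq (aNorm_nonneg (T u)), ← Real.sqrt_sq (aNorm_nonneg u),
    ← Real.sqrt_mul (norm_nonneg _)]
  exact Real.sqrt_le_sqrt hsq

lemma HasAAdjoint.exists_norm_inner_le (hA : A.IsPositive) {T : H →L[ℂ] H}
    (hT : HasAAdjoint A T) :
    ∃ c, ∀ u v, aNorm A u ≤ 1 → aNorm A v ≤ 1 → ‖⟪A (T u), v⟫_ℂ‖ ≤ c := by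
  obtain ⟨c, hc, hTc⟩ := hT.exists_aNorm_apply_le hA
  refine ⟨c, fun u v hu hv => ?_⟩
  calc ‖⟪A (T u), v⟫_ℂ‖ ≤ aNorm A (T u) * aNorm A v := norm_inner_le_aNorm_mul_aNorm hA _ _
    _ ≤ c * aNorm A u * aNorm A v := by gcongr; exacts [aNorm_nonneg v, hTc u]
    _ ≤ c * 1 * 1 := by gcongr; exact aNorm_nonneg v
    _ = c := by ring

end APositive

section NumericalRadius

variable {A : H →L[ℂ] H}

omit [CompleteSpace H] in
lemma wA_le {T : H →L[ℂ] H} {c : ℝ} (hc : 0 ≤ c)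
    (h : ∀ x, (⟪A x, x⟫_ℂ).re = 1 → ‖⟪A (T x), x⟫_ℂ‖ ≤ c) : wA A T ≤ c :=
  Real.sSup_le (fun _ ⟨x, hx, hr⟩ => hr ▸ h x (Real.sqrt_eq_one.mp hx)) hc

omit [CompleteSpace H] in
lemma wB_nonneg (T1 T2 T3 T4 : H →L[ℂ] H) : 0 ≤ wB A T1 T2 T3 T4 :=
  Real.sSup_nonneg fun _ ⟨_, _, _, hr⟩ => hr ▸ norm_nonneg _

lemma norm_le_wB (hA : A.IsPositive) {T1 T2 T3 T4 : H →L[ℂ] H} (h1 : HasAAdjoint A T1)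
    (h2 : HasAAdjoint A T2) (h3 : HasAAdjoint A T3) (h4 : HasAAdjoint A T4) {x y : H}
    (hxy : (⟪A x, x⟫_ℂ).re + (⟪A y, y⟫_ℂ).re = 1) :
    ‖⟪A (T1 x + T2 y), x⟫_ℂ + ⟪A (T3 x + T4 y), y⟫_ℂ‖ ≤ wB A T1 T2 T3 T4 := by
  refine le_csSup ?_ ⟨x, y, by rw [hxy, Real.sqrt_one], rfl⟩
  obtain ⟨c1, hc1⟩ := h1.exists_norm_inner_le hA
  obtain ⟨c2, hc2⟩ := h2.exists_norm_inner_le hA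
  obtain ⟨c3, hc3⟩ := h3.exists_norm_inner_le hA
  obtain ⟨c4, hc4⟩ := h4.exists_norm_inner_le hA
  refine ⟨c1 + c2 + c3 + c4, ?_⟩
  rintro _ ⟨u, v, huv, rfl⟩
  have huv : (⟪A u, u⟫_ℂ).re + (⟪A v, v⟫_ℂ).re = 1 := Real.sqrt_eq_one.mp huv
  have hu : aNorm A u ≤ 1 :=
    Real.sqrt_le_one.mpr (by linarith [aNorm_sq hA v, sq_nonneg (aNorm A v)])
  have hv : aNorm A v ≤ 1 :=
    Real.sqrt_le_one.mpr (by linarith [aNorm_sq hA u, sq_nonneg (aNorm A u)])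
  simp only [map_add, inner_add_left]
  calc _ ≤ ‖⟪A (T1 u), u⟫_ℂ‖ + ‖⟪A (T2 v), u⟫_ℂ‖ + (‖⟪A (T3 u), v⟫_ℂ‖ + ‖⟪A (T4 v), v⟫_ℂ‖) :=
        (norm_add_le _ _).trans (add_le_add (norm_add_le _ _) (norm_add_le _ _))
    _ ≤ c1 + c2 + c3 + c4 := by
        linarith [hc1 u u hu hu, hc2 v u hv hu, hc3 u v hu hv, hc4 v v hv hv]

omit [CompleteSpace H] in
lemma re_inner_smul_self (x : H) (d : ℂ) :
    (⟪A (d • x), d • x⟫_ℂ).re = ‖d‖ ^ 2 * (⟪A x, x⟫_ℂ).re := by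
  rw [map_smul, inner_smul_left, inner_smul_right, ← mul_assoc, RCLike.conj_mul]
  norm_cast
  exact Complex.re_ofReal_mul _ _

omit [CompleteSpace H] in
lemma norm_conj_mul_add_mul_le_two_mul {T1 T2 T3 T4 : H →L[ℂ] H} {w : ℝ}
    (hw : ∀ x y : H, (⟪A x, x⟫_ℂ).re + (⟪A y, y⟫_ℂ).re = 1 →
      ‖⟪A (T1 x + T2 y), x⟫_ℂ + ⟪A (T3 x + T4 y), y⟫_ℂ‖ ≤ w)
    {x : H} (hx : (⟪A x, x⟫_ℂ).re = 1) {ε : ℂ} (hε : ‖ε‖ = 1) :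
    ‖starRingEnd ℂ ε * ⟪A (T2 x), x⟫_ℂ + ε * ⟪A (T3 x), x⟫_ℂ‖ ≤ 2 * w := by
  set c : ℂ := ↑(√2)⁻¹
  have hc : ‖c‖ ^ 2 = 2⁻¹ := by
    rw [Complex.norm_real, Real.norm_eq_abs, sq_abs, inv_pow, Real.sq_sqrt zero_le_two]
  have hc' : starRingEnd ℂ c * c = 2⁻¹ := by
    rw [Complex.conj_mul', ← Complex.ofReal_pow, hc]
    norm_num
  have hunit : ∀ δ : ℂ, ‖δ‖ = 1 →
      (⟪A (c • x), c • x⟫_ℂ).re + (⟪A ((c * δ) • x), (c * δ) • x⟫_ℂ).re = 1 := by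
    intro δ hδ
    rw [re_inner_smul_self, re_inner_smul_self, hx, norm_mul, hδ]
    norm_num [hc]
  have hdiff : starRingEnd ℂ ε * ⟪A (T2 x), x⟫_ℂ + ε * ⟪A (T3 x), x⟫_ℂ =
      (⟪A (T1 (c • x) + T2 ((c * ε) • x)), c • x⟫_ℂ
        + ⟪A (T3 (c • x) + T4 ((c * ε) • x)), (c * ε) • x⟫_ℂ)
      - (⟪A (T1 (c • x) + T2 ((c * -ε) • x)), c • x⟫_ℂ
        + ⟪A (T3 (c • x) + T4 ((c * -ε) • x)), (c * -ε) • x⟫_ℂ) := by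
    simp only [map_add, map_smul, inner_add_left, inner_smul_left, inner_smul_right, map_mul,
      map_neg]
    linear_combination (-2 * starRingEnd ℂ ε * ⟪A (T2 x), x⟫_ℂ - 2 * ε * ⟪A (T3 x), x⟫_ℂ) * hc'
  rw [hdiff, two_mul]
  exact (norm_sub_le _ _).trans
    (add_le_add (hw _ _ (hunit ε hε)) (hw _ _ (hunit (-ε) (by rwa [norm_neg]))))

end NumericalRadius

theorem stmt7_general (A T1 T2 T3 T4 : H →L[ℂ] H) (hA : A.IsPositive)
    (h1 : ∃ S : H →L[ℂ] H, A ∘L S = (ContinuousLinearMap.adjoint T1) ∘L A)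
    (h2 : ∃ S : H →L[ℂ] H, A ∘L S = (ContinuousLinearMap.adjoint T2) ∘L A)
    (h3 : ∃ S : H →L[ℂ] H, A ∘L S = (ContinuousLinearMap.adjoint T3) ∘L A)
    (h4 : ∃ S : H →L[ℂ] H, A ∘L S = (ContinuousLinearMap.adjoint T4) ∘L A) :
    max (max (wA A T1) (wA A T4)) (max (wA A (T2 + T3) / 2) (wA A (T2 - T3) / 2)) ≤
      wB A T1 T2 T3 T4 := by
  have hw x y (hxy : (⟪A x, x⟫_ℂ).re + (⟪A y, y⟫_ℂ).re = 1) :=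
    norm_le_wB hA h1 h2 h3 h4 hxy
  have hw0 : 0 ≤ wB A T1 T2 T3 T4 := wB_nonneg T1 T2 T3 T4
  refine max_le (max_le ?_ ?_) (max_le ?_ ?_)
  · exact wA_le hw0 fun x hx => by simpa using hw x 0 (by simpa using hx)
  · exact wA_le hw0 fun x hx => by simpa using hw 0 x (by simpa using hx)
  · rw [div_le_iff₀ two_pos, mul_comm]
    refine wA_le (by positivity) fun x hx => ?_
    simpa [inner_add_left] using norm_conj_mul_add_mul_le_two_mul hw hx (ε := 1) (by simp)
  · rw [div_le_iff₀ two_pos, mul_comm]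
    refine wA_le (by positivity) fun x hx => ?_
    have hI : starRingEnd ℂ Complex.I * ⟪A (T2 x), x⟫_ℂ + Complex.I * ⟪A (T3 x), x⟫_ℂ =
        -Complex.I * ⟪A ((T2 - T3) x), x⟫_ℂ := by
      rw [Complex.conj_I, sub_apply, map_sub, inner_sub_left]
      ring
    have := norm_conj_mul_add_mul_le_two_mul hw hx (ε := Complex.I) Complex.norm_I
    rwa [hI, norm_mul, norm_neg, Complex.norm_I, one_mul] at this

theorem stmt7 (A T1 T2 T3 T4 : H →L[ℂ] H) (hA : A.IsPositive) (hA' : ∀ x : H, x ≠ 0 → 0 < (⟪A x, x⟫_ℂ).re)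
    (h1 : ∃ S : H →L[ℂ] H, A ∘L S = (ContinuousLinearMap.adjoint T1) ∘L A)
    (h2 : ∃ S : H →L[ℂ] H, A ∘L S = (ContinuousLinearMap.adjoint T2) ∘L A)
    (h3 : ∃ S : H →L[ℂ] H, A ∘L S = (ContinuousLinearMap.adjoint T3) ∘L A)
    (h4 : ∃ S : H →L[ℂ] H, A ∘L S = (ContinuousLinearMap.adjoint T4) ∘L A) :
    max (max (wA A T1) (wA A T4)) (max (wA A (T2 + T3) / 2) (wA A (T2 - T3) / 2)) ≤
      wB A T1 T2 T3 T4 :=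
  stmt7_general A T1 T2 T3 T4 hA h1 h2 h3 h4
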